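/- Let θ_max ∈ (0, π). Then there exists R_b > 4/3 with θ_max < 2·arccos(2/(3R_b)). Moreover, for this R_b the following holds: if p, q, z ∈ ℝ² satisfy |p - z| ≤ 4/3, |q - z| ≤ 4/3, and the angle at z between p - z and q - z is at most θ_max, then the circular sector of B(z, R_b) bounded by the rays from z through p and through q is contained in B(p, R_b) ∪ B(q, R_b). -/

import Mathlib

/-!
Take `R_b = 2 / cos (θ_max / 2)`. Write `w - z = a (p - z) + b (q - z)` with, say,
`b ‖q - z‖ ≤ a ‖p - z‖`. Then `w - z` lies on the side of `p - z` of the bisector of the sector,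
so the angle between `w - z` and `p - z` is at most `θ_max / 2`, and its cosine is at least
`cos (θ_max / 2) ≥ (4/3) / (2 R_b)`. By the law of cosines this, together with
`‖w - z‖ ≤ R_b` and `‖p - z‖ ≤ 4/3 ≤ R_b`, gives `‖w - p‖ ≤ R_b`.
-/

open Real Set Metric

open InnerProductGeometry
open scoped RealInnerProductSpace

/-- For a parallelogram with sides `A ≥ B` meeting at an angle `2θ`, `c = cos θ`, and diagonal `X`:
the diagonal makes an angle at most `θ` with the longer side. -/
lemma mul_le_add_mul_of_sq_eq {A B c X : ℝ} (hB : 0 ≤ B) (hBA : B ≤ A) (hc : 0 ≤ c)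
    (hc1 : c ≤ 1) (hX : 0 ≤ X) (hXsq : X ^ 2 = A ^ 2 + 2 * (2 * c ^ 2 - 1) * A * B + B ^ 2) :
    c * X ≤ A + (2 * c ^ 2 - 1) * B := by
  have hrhs : 0 ≤ A + (2 * c ^ 2 - 1) * B := by nlinarith [mul_nonneg hB (sq_nonneg c)]
  have hfactor : (A + (2 * c ^ 2 - 1) * B) ^ 2 - (c * X) ^ 2
      = (1 - c ^ 2) * (A - B) * (A + (4 * c ^ 2 - 1) * B) := by
    rw [mul_pow, hXsq]; ring
  have hnonneg : 0 ≤ (1 - c ^ 2) * (A - B) * (A + (4 * c ^ 2 - 1) * B) := by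
    have : 0 ≤ 1 - c ^ 2 := by nlinarith
    have : 0 ≤ A + (4 * c ^ 2 - 1) * B := by nlinarith [mul_nonneg hB (sq_nonneg c)]
    have : 0 ≤ A - B := by linarith
    positivity
  exact pow_le_pow_iff_left₀ (by positivity) hrhs two_ne_zero |>.mp (by linarith)

variable {E : Type*} [NormedAddCommGroup E] [InnerProductSpace ℝ E]

lemma cos_half_angle_mul_le_inner_smul_add_smul (u v : E) {a b : ℝ} (ha : 0 ≤ a) (hb : 0 ≤ b)
    (hab : b * ‖v‖ ≤ a * ‖u‖) :
    cos (angle u v / 2) * (‖a • u + b • v‖ * ‖u‖) ≤ ⟪a • u + b • v, u⟫ := by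
  set c := cos (angle u v / 2)
  have hcos : cos (angle u v) = 2 * c ^ 2 - 1 := by
    rw [cos_sq (angle u v / 2)]; ring_nf
  have huv : ⟪u, v⟫ = (2 * c ^ 2 - 1) * (‖u‖ * ‖v‖) := by
    rw [← hcos, cos_angle_mul_norm_mul_norm]
  have hc : 0 ≤ c := cos_nonneg_of_mem_Icc
    ⟨by linarith [pi_pos, angle_nonneg u v], by linarith [angle_le_pi u v]⟩
  have hsq : ‖a • u + b • v‖ ^ 2
      = (a * ‖u‖) ^ 2 + 2 * (2 * c ^ 2 - 1) * (a * ‖u‖) * (b * ‖v‖) + (b * ‖v‖) ^ 2 := by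
    rw [norm_add_sq_real, norm_smul, norm_smul, real_inner_smul_left, real_inner_smul_right, huv,
      Real.norm_of_nonneg ha, Real.norm_of_nonneg hb]
    ring
  have hinner : ⟪a • u + b • v, u⟫ = ‖u‖ * (a * ‖u‖ + (2 * c ^ 2 - 1) * (b * ‖v‖)) := by
    rw [inner_add_left, real_inner_smul_left, real_inner_smul_left, real_inner_self_eq_norm_sq,
      real_inner_comm, huv]
    ring
  have key := mul_le_add_mul_of_sq_eq (by positivity) hab hc (cos_le_one _) (norm_nonneg _) hsq
  rw [hinner]
  linarith [mul_le_mul_of_nonneg_left key (norm_nonneg u)]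

lemma norm_sub_le_of_mul_le_inner (x u : E) {r R : ℝ} (hrR : r ≤ R) (hx : ‖x‖ ≤ R)
    (hu : ‖u‖ ≤ r) (h : r * (‖x‖ * ‖u‖) ≤ 2 * R * ⟪x, u⟫) : ‖x - u‖ ≤ R := by
  have hr : 0 ≤ r := (norm_nonneg u).trans hu
  rcases (hr.trans hrR).eq_or_lt with rfl | hR
  · have : ‖u‖ = 0 := le_antisymm (hu.trans hrR) (norm_nonneg u)
    simpa [norm_eq_zero.mp this] using hx
  set X := ‖x‖
  set U := ‖u‖
  -- `X² + U² - (r / R) X U` is convex on `[0, R] × [0, r]`, so it is bounded by its corner values.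
  have hcorner : R * U ^ 2 - r * X * U ≤ r * U * (R - X) := by
    nlinarith [mul_nonneg (mul_nonneg hR.le (norm_nonneg u)) (sub_nonneg.2 hu)]
  have hquad : R * X ^ 2 + R * U ^ 2 - r * X * U ≤ R ^ 3 := by
    have : r * U ≤ R * (R + X) := by nlinarith [norm_nonneg x, norm_nonneg u]
    nlinarith [mul_le_mul_of_nonneg_left this (sub_nonneg.2 hx)]
  have hsq : ‖x - u‖ ^ 2 ≤ R ^ 2 := by
    rw [norm_sub_sq_real]
    nlinarith
  exact pow_le_pow_iff_left₀ (norm_nonneg _) hR.le two_ne_zero |>.mp hsq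

lemma mem_closedBall_of_mem_sector {p q z w : E} {r R a b : ℝ} (hrR : r ≤ R) (hp : dist p z ≤ r)
    (hsector : r ≤ 2 * R * cos (angle (p - z) (q - z) / 2)) (hw : dist w z ≤ R)
    (ha : 0 ≤ a) (hb : 0 ≤ b) (hwab : w - z = a • (p - z) + b • (q - z))
    (hba : b * dist q z ≤ a * dist p z) : w ∈ closedBall p R := by
  simp only [dist_eq_norm] at hp hw hba
  have hR : 0 ≤ R := (norm_nonneg _).trans (hp.trans hrR)
  have hcos := cos_half_angle_mul_le_inner_smul_add_smul (p - z) (q - z) ha hb hba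
  rw [← hwab] at hcos
  rw [mem_closedBall, dist_eq_norm, ← sub_sub_sub_cancel_right w p z]
  refine norm_sub_le_of_mul_le_inner _ _ hrR hw hp ?_
  calc r * (‖w - z‖ * ‖p - z‖)
      ≤ 2 * R * cos (angle (p - z) (q - z) / 2) * (‖w - z‖ * ‖p - z‖) := by gcongr
    _ ≤ 2 * R * ⟪w - z, p - z⟫ := by rw [mul_assoc]; gcongr

lemma mem_closedBall_union_of_mem_sector {p q z w : E} {r R : ℝ} (hrR : r ≤ R)
    (hp : dist p z ≤ r) (hq : dist q z ≤ r)
    (hsector : r ≤ 2 * R * cos (angle (p - z) (q - z) / 2)) (hw : dist w z ≤ R)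
    (hcone : ∃ a b : ℝ, 0 ≤ a ∧ 0 ≤ b ∧ w - z = a • (p - z) + b • (q - z)) :
    w ∈ closedBall p R ∪ closedBall q R := by
  obtain ⟨a, b, ha, hb, hwab⟩ := hcone
  rcases le_total (b * dist q z) (a * dist p z) with hba | hab
  · exact .inl (mem_closedBall_of_mem_sector hrR hp hsector hw ha hb hwab hba)
  · rw [angle_comm] at hsector
    rw [add_comm] at hwab
    exact .inr (mem_closedBall_of_mem_sector hrR hq hsector hw hb ha hwab hab)

theorem stmt_9 (θmax : ℝ) (hθ : θmax ∈ Set.Ioo 0 π) :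
    ∃ Rb : ℝ, Rb > 4/3 ∧ θmax < 2 * Real.arccos (2 / (3 * Rb)) ∧
      ∀ p q z : EuclideanSpace ℝ (Fin 2),
        dist p z ≤ 4/3 → dist q z ≤ 4/3 →
        InnerProductGeometry.angle (p - z) (q - z) ≤ θmax →
        ∀ w : EuclideanSpace ℝ (Fin 2), dist w z ≤ Rb →
          (∃ a b : ℝ, 0 ≤ a ∧ 0 ≤ b ∧ w - z = a • (p - z) + b • (q - z)) →
          w ∈ closedBall p Rb ∪ closedBall q Rb := by
  obtain ⟨hθ0, hθπ⟩ := hθ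
  set c := cos (θmax / 2)
  have hc : 0 < c := cos_pos_of_mem_Ioo ⟨by linarith, by linarith⟩
  have hRb : 4 / 3 < 2 / c := by
    rw [lt_div_iff₀ hc]
    linarith [cos_le_one (θmax / 2)]
  refine ⟨2 / c, hRb, ?_, fun p q z hp hq hangle w hw hcone => ?_⟩
  · have hlt : arccos c < arccos (c / 3) :=
      arccos_lt_arccos (by linarith) (by linarith) (cos_le_one _)
    rw [arccos_cos (by linarith) (by linarith)] at hlt
    have : 2 / (3 * (2 / c)) = c / 3 := by field_simp
    rw [this]
    linarith
  · refine mem_closedBall_union_of_mem_sector hRb.le hp hq ?_ hw hcone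
    have hcos : c ≤ cos (angle (p - z) (q - z) / 2) :=
      cos_le_cos_of_nonneg_of_le_pi (by linarith [angle_nonneg (p - z) (q - z)]) (by linarith)
        (by linarith)
    calc (4 / 3 : ℝ) ≤ 2 * (2 / c) * c := by field_simp; norm_num
      _ ≤ 2 * (2 / c) * cos (angle (p - z) (q - z) / 2) := by gcongr
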